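/- Let A be an m×n real matrix, b ∈ ℝᵐ, λ > 0, p ≥ 1, σ > 0, and define H_{p,σ}(x) = ‖Ax − b‖₂² + λ·∑_{k=1}^n φ_σ(x_k)^p for x ∈ ℝⁿ. Then H_{p,σ} is twice differentiable on ℝⁿ with Hessian ∇²H_{p,σ}(x) = 2AᵀA + λ·p·Diag(w(x)), where w(x) ∈ ℝⁿ has components w_j(x) = (p−1)·φ_σ(x_j)^{p−2}·erf(x_j/(√2·σ))² + φ_σ(x_j)^{p−1}·√(2/(πσ²))·exp(−x_j²/(2σ²)); in particular the mixed second partial derivatives ∂²/∂x_i∂x_j of the penalty term vanish for i ≠ j. -/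

import Mathlib

open Real Matrix

/-- The error function `erf(t) = (2/√π)·∫₀ᵗ exp(−u²) du`. -/
noncomputable def erf (t : ℝ) : ℝ := (2 / Real.sqrt π) * ∫ u in (0 : ℝ)..t, Real.exp (-u ^ 2)

/-- The smoothed absolute value `φ_σ(t) = t·erf(t/(√2·σ)) + √(2/π)·σ·exp(−t²/(2σ²))`. -/
noncomputable def phi (σ t : ℝ) : ℝ :=
  t * erf (t / (Real.sqrt 2 * σ)) + Real.sqrt (2 / π) * σ * Real.exp (-t ^ 2 / (2 * σ ^ 2))

/-!
`H` is a least-squares term plus a separable penalty `∑ ψ(x_k)` with `ψ = φ_σ^p`. In `φ_σ'` the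
term `t·(erf(t/(√2σ)))'` cancels against the derivative of the Gaussian, so
`φ_σ' = erf(·/(√2σ))`; as `φ_σ > 0`, `ψ` is twice differentiable for every real `p`, with
`ψ' = p·φ_σ^{p-1}·erf(·/(√2σ))` and `ψ'' = p·w`. Hence the gradient of `H` is
`2Aᵀ(Ax − b) + λ·(ψ'(x_k))_k`, whose Jacobian is `2AᵀA + λ·p·Diag(w(x))`.
-/

theorem hasDerivAt_erf (t : ℝ) : HasDerivAt erf (2 / √π * exp (-t ^ 2)) t := by
  have hcont : Continuous fun u : ℝ => exp (-u ^ 2) := by fun_prop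
  exact (intervalIntegral.integral_hasDerivAt_right (hcont.intervalIntegrable 0 t)
    (hcont.stronglyMeasurableAtFilter _ _) hcont.continuousAt).const_mul _

theorem erf_nonneg {t : ℝ} (ht : 0 ≤ t) : 0 ≤ erf t :=
  mul_nonneg (by positivity) (intervalIntegral.integral_nonneg ht fun u _ => (exp_pos _).le)

theorem erf_nonpos {t : ℝ} (ht : t ≤ 0) : erf t ≤ 0 := by
  rw [erf, intervalIntegral.integral_symm, mul_neg, neg_nonpos]
  exact mul_nonneg (by positivity) (intervalIntegral.integral_nonneg ht fun u _ => (exp_pos _).le)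

section

variable {σ : ℝ}

theorem phi_pos (hσ : 0 < σ) (t : ℝ) : 0 < phi σ t := by
  have hlin : 0 ≤ t * erf (t / (√2 * σ)) := by
    rcases le_total 0 t with ht | ht
    · exact mul_nonneg ht (erf_nonneg (by positivity))
    · exact mul_nonneg_of_nonpos_of_nonpos ht
        (erf_nonpos (div_nonpos_of_nonpos_of_nonneg ht (by positivity)))
  have hgauss : 0 < √(2 / π) * σ * exp (-t ^ 2 / (2 * σ ^ 2)) := by
    have : 0 < √(2 / π) := sqrt_pos.2 (by positivity)
    positivity
  exact add_pos_of_nonneg_of_pos hlin hgauss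

theorem sqrt_two_div_pi_mul_sq (hσ : 0 < σ) : √(2 / (π * σ ^ 2)) = √(2 / π) / σ := by
  rw [← div_div, sqrt_div' _ (by positivity), sqrt_sq hσ.le]

theorem hasDerivAt_erf_div (hσ : 0 < σ) (t : ℝ) :
    HasDerivAt (fun t => erf (t / (√2 * σ)))
      (√(2 / (π * σ ^ 2)) * exp (-t ^ 2 / (2 * σ ^ 2))) t := by
  refine ((hasDerivAt_erf _).comp t ((hasDerivAt_id' t).div_const (√2 * σ))).congr_deriv ?_
  have h2 : √2 ^ 2 = 2 := sq_sqrt zero_le_two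
  rw [sqrt_two_div_pi_mul_sq hσ, sqrt_div' _ pi_pos.le, div_pow, mul_pow, h2]
  field_simp
  rw [h2]

theorem hasDerivAt_phi (hσ : 0 < σ) (t : ℝ) : HasDerivAt (phi σ) (erf (t / (√2 * σ))) t := by
  have hgauss : HasDerivAt (fun t => exp (-t ^ 2 / (2 * σ ^ 2)))
      (exp (-t ^ 2 / (2 * σ ^ 2)) * (-(2 * t) / (2 * σ ^ 2))) t := by
    simpa using (((hasDerivAt_pow 2 t).neg).div_const (2 * σ ^ 2)).exp
  refine (((hasDerivAt_id' t).mul (hasDerivAt_erf_div hσ t)).add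
    (hgauss.const_mul (√(2 / π) * σ))).congr_deriv ?_
  rw [sqrt_two_div_pi_mul_sq hσ]
  field_simp
  ring

theorem hasDerivAt_phi_rpow (p : ℝ) (hσ : 0 < σ) (t : ℝ) :
    HasDerivAt (fun t => phi σ t ^ p) (p * phi σ t ^ (p - 1) * erf (t / (√2 * σ))) t :=
  (hasDerivAt_rpow_const (Or.inl (phi_pos hσ t).ne')).comp t (hasDerivAt_phi hσ t)

theorem hasDerivAt_deriv_phi_rpow (p : ℝ) (hσ : 0 < σ) (t : ℝ) :
    HasDerivAt (fun t => p * phi σ t ^ (p - 1) * erf (t / (√2 * σ)))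
      (p * ((p - 1) * phi σ t ^ (p - 2) * erf (t / (√2 * σ)) ^ 2
        + phi σ t ^ (p - 1) * √(2 / (π * σ ^ 2)) * exp (-t ^ 2 / (2 * σ ^ 2)))) t := by
  refine (((hasDerivAt_phi_rpow (p - 1) hσ t).const_mul p).mul
    (hasDerivAt_erf_div hσ t)).congr_deriv ?_
  rw [show p - 1 - 1 = p - 2 by ring]
  ring

end

section Hessian

variable {ι : Type*} [Fintype ι]

noncomputable def dotProductCLM : (ι → ℝ) →L[ℝ] (ι → ℝ) →L[ℝ] ℝ :=
  LinearMap.toContinuousLinearMap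
    (LinearMap.toContinuousLinearMap.toLinearMap ∘ₗ dotProductBilin ℝ ℝ)

@[simp]
theorem dotProductCLM_apply (g v : ι → ℝ) : dotProductCLM g v = g ⬝ᵥ v := rfl

theorem hasFDerivAt_sum_comp {g : ℝ → ℝ} {g' y : ι → ℝ} (hg : ∀ k, HasDerivAt g (g' k) (y k)) :
    HasFDerivAt (fun x : ι → ℝ => ∑ k, g (x k)) (dotProductCLM g') y := by
  refine (HasFDerivAt.fun_sum fun k _ =>
    (hg k).comp_hasFDerivAt y (hasFDerivAt_apply k y)).congr_fderiv ?_
  ext v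
  simp [dotProduct]

theorem hasFDerivAt_sum_sq_mulVec_sub {κ : Type*} [Fintype κ] (A : Matrix κ ι ℝ) (b : κ → ℝ)
    (y : ι → ℝ) :
    HasFDerivAt (fun x => ∑ i, ((A *ᵥ x - b) i) ^ 2)
      (dotProductCLM ((2 : ℝ) • ((A *ᵥ y - b) ᵥ* A))) y := by
  have hsq := hasFDerivAt_sum_comp (g' := (2 : ℝ) • (A *ᵥ y - b)) fun i => by
    simpa using hasDerivAt_pow 2 ((A *ᵥ y - b) i)
  have hres : HasFDerivAt (fun x => A *ᵥ x - b) A.mulVecLin.toContinuousLinearMap y :=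
    A.mulVecLin.toContinuousLinearMap.hasFDerivAt.sub_const b
  refine (hsq.comp y hres).congr_fderiv ?_
  ext v
  simp only [ContinuousLinearMap.comp_apply, dotProductCLM_apply,
    LinearMap.coe_toContinuousLinearMap', mulVecLin_apply, dotProduct_mulVec, ← smul_vecMul]

theorem hasFDerivAt_mulVec_sub_vecMul {κ : Type*} [Fintype κ] (A : Matrix κ ι ℝ) (b : κ → ℝ)
    (y : ι → ℝ) :
    HasFDerivAt (fun x => (A *ᵥ x - b) ᵥ* A) (Aᵀ * A).vecMulLinear.toContinuousLinearMap y := by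
  have hfun : (fun x => (A *ᵥ x - b) ᵥ* A) = fun x => x ᵥ* (Aᵀ * A) - b ᵥ* A := by
    ext x
    rw [sub_vecMul, ← vecMul_transpose, vecMul_vecMul]
  rw [hfun]
  exact (Aᵀ * A).vecMulLinear.toContinuousLinearMap.hasFDerivAt.sub_const _

variable [DecidableEq ι]

theorem hasFDerivAt_comp_left {g : ℝ → ℝ} {g' y : ι → ℝ} (hg : ∀ k, HasDerivAt g (g' k) (y k)) :
    HasFDerivAt (fun x : ι → ℝ => g ∘ x) (diagonal g').vecMulLinear.toContinuousLinearMap y :=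
  hasFDerivAt_pi'.2 fun k => ((hg k).comp_hasFDerivAt y (hasFDerivAt_apply k y)).congr_fderiv
    (by ext v; simp [vecMul_diagonal, mul_comm])

/- The Jacobian of the gradient acts by `v ↦ v ᵥ* M`, so that `M i j` is `∂ᵢ∂ⱼ f`
with the order of differentiation used in `fderiv (fun y ↦ fderiv f y eⱼ) x eᵢ`. -/
theorem hessian_of_hasFDerivAt_gradient {f : (ι → ℝ) → ℝ} {G : (ι → ℝ) → ι → ℝ}
    {M : (ι → ℝ) → Matrix ι ι ℝ} (hf : ∀ y, HasFDerivAt f (dotProductCLM (G y)) y)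
    (hG : ∀ y, HasFDerivAt G (M y).vecMulLinear.toContinuousLinearMap y) :
    Differentiable ℝ f ∧ Differentiable ℝ (fderiv ℝ f) ∧
      ∀ x i j, fderiv ℝ (fun y => fderiv ℝ f y (Pi.single j 1)) x (Pi.single i 1) = M x i j := by
  have hfderiv : fderiv ℝ f = fun y => dotProductCLM (G y) := funext fun y => (hf y).fderiv
  refine ⟨fun y => (hf y).differentiableAt, ?_, fun x i j => ?_⟩
  · rw [hfderiv]
    exact dotProductCLM.differentiable.comp fun y => (hG y).differentiableAt
  · have hpartial : (fun y => fderiv ℝ f y (Pi.single j 1)) = fun y => G y j := by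
      simp [hfderiv, dotProduct_single]
    rw [hpartial, (hasFDerivAt_pi'.1 (hG x) j).fderiv]
    simp

end Hessian

theorem H_hessian_general {m n : ℕ} (A : Matrix (Fin m) (Fin n) ℝ) (b : Fin m → ℝ)
    (lam p σ : ℝ) (hσ : 0 < σ)
    (H : (Fin n → ℝ) → ℝ)
    (hH : ∀ x, H x = (∑ i, ((A.mulVec x - b) i) ^ 2) + lam * ∑ k, phi σ (x k) ^ p) :
    Differentiable ℝ H ∧
    Differentiable ℝ (fderiv ℝ H) ∧
    ∀ (x : Fin n → ℝ) (i j : Fin n),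
      fderiv ℝ (fun y : Fin n → ℝ => fderiv ℝ H y (Pi.single j 1)) x (Pi.single i 1)
        = (((2 : ℝ) • (Aᵀ * A)
            + (lam * p) • Matrix.diagonal (fun k : Fin n =>
                (p - 1) * phi σ (x k) ^ (p - 2) * erf (x k / (Real.sqrt 2 * σ)) ^ 2
                  + phi σ (x k) ^ (p - 1) * Real.sqrt (2 / (π * σ ^ 2))
                      * Real.exp (-(x k) ^ 2 / (2 * σ ^ 2))) :
            Matrix (Fin n) (Fin n) ℝ) i j) := by
  obtain rfl : H = fun x => (∑ i, ((A *ᵥ x - b) i) ^ 2) + lam * ∑ k, phi σ (x k) ^ p :=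
    funext hH
  refine hessian_of_hasFDerivAt_gradient
    (G := fun y => (2 : ℝ) • ((A *ᵥ y - b) ᵥ* A)
      + lam • fun k => p * phi σ (y k) ^ (p - 1) * erf (y k / (√2 * σ)))
    (fun y => ?_) (fun y => ?_)
  · have hpenalty := hasFDerivAt_sum_comp fun k => hasDerivAt_phi_rpow p hσ (y k)
    refine ((hasFDerivAt_sum_sq_mulVec_sub A b y).add
      (hpenalty.const_mul lam)).congr_fderiv ?_
    simp only [map_add, map_smul]
  · have hpenalty := hasFDerivAt_comp_left fun k => hasDerivAt_deriv_phi_rpow p hσ (y k)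
    refine (((hasFDerivAt_mulVec_sub_vecMul A b y).const_smul (2 : ℝ)).add
      (hpenalty.const_smul lam)).congr_fderiv ?_
    ext v k
    simp only [_root_.add_apply, _root_.smul_apply,
      LinearMap.coe_toContinuousLinearMap', vecMulLinear_apply, vecMul_add, vecMul_smul,
      vecMul_diagonal, Pi.add_apply, Pi.smul_apply, smul_eq_mul]
    ring

/-- The functional `H_{p,σ}(x) = ‖Ax − b‖₂² + λ·∑ₖ φ_σ(xₖ)^p` is twice
differentiable on `ℝⁿ` with Hessian `∇²H_{p,σ}(x) = 2AᵀA + λ·p·Diag(w(x))`, where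
`w_j(x) = (p−1)·φ_σ(x_j)^{p−2}·erf(x_j/(√2·σ))² + φ_σ(x_j)^{p−1}·√(2/(πσ²))·exp(−x_j²/(2σ²))`;
in particular the mixed second partial derivatives of the penalty vanish off the
diagonal. -/
theorem H_hessian {m n : ℕ} (A : Matrix (Fin m) (Fin n) ℝ) (b : Fin m → ℝ)
    (lam p σ : ℝ) (hlam : 0 < lam) (hp : 1 ≤ p) (hσ : 0 < σ)
    (H : (Fin n → ℝ) → ℝ)
    (hH : ∀ x, H x = (∑ i, ((A.mulVec x - b) i) ^ 2) + lam * ∑ k, phi σ (x k) ^ p) :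
    Differentiable ℝ H ∧
    Differentiable ℝ (fderiv ℝ H) ∧
    ∀ (x : Fin n → ℝ) (i j : Fin n),
      fderiv ℝ (fun y : Fin n → ℝ => fderiv ℝ H y (Pi.single j 1)) x (Pi.single i 1)
        = (((2 : ℝ) • (Aᵀ * A)
            + (lam * p) • Matrix.diagonal (fun k : Fin n =>
                (p - 1) * phi σ (x k) ^ (p - 2) * erf (x k / (Real.sqrt 2 * σ)) ^ 2
                  + phi σ (x k) ^ (p - 1) * Real.sqrt (2 / (π * σ ^ 2))
                      * Real.exp (-(x k) ^ 2 / (2 * σ ^ 2))) :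
            Matrix (Fin n) (Fin n) ℝ) i j) :=
  H_hessian_general A b lam p σ hσ H hH
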